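/- arXiv:1103.1460 — 3 statements merged into one kernel-verified Lean document; each statement's English description precedes it below -/
import Mathlib

section
/- Let f : [0, T] → ℝ be any bounded function. For t ∈ [0,T] define M_t = sup_{0≤s≤t} f(s), m_t = inf_{0≤s≤t} f(s), Y_t = M_t − f(t), and Ŷ_t = f(t) − m_t. Then for every t ∈ [0,T]: Y_t + Ŷ_t = M_t − m_t = max( sup_{0≤s≤t} Y_s , sup_{0≤s≤t} Ŷ_s ). -/
/-!
Both drawdown and drawup are bounded by the range `M t - m t`. Conversely, every oscillation
`f u - f s` of `f` on `[0, t]` is dominated by the drawdown at `s` if `u ≤ s`, and by the drawup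
at `u` if `s ≤ u`; taking the supremum over `u` and the infimum over `s` gives the other inequality.
-/

open Set Bornology

lemma csSup_sub_csInf_le {s t : Set ℝ} (hs : s.Nonempty) (ht : t.Nonempty) {c : ℝ}
    (h : ∀ x ∈ s, ∀ y ∈ t, x - y ≤ c) : sSup s - sInf t ≤ c := by
  rw [sub_le_iff_le_add]
  refine csSup_le hs fun x hx => ?_
  have : x - c ≤ sInf t := le_csInf ht fun y hy => by linarith [h x hx y hy]
  linarith

section Drawdown

variable {α : Type*} [LinearOrder α] (f : α → ℝ) {a s t u : α}

noncomputable def runningMax (a t : α) : ℝ := sSup (f '' Icc a t)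

noncomputable def runningMin (a t : α) : ℝ := sInf (f '' Icc a t)

noncomputable def drawdown (a t : α) : ℝ := runningMax f a t - f t

noncomputable def drawup (a t : α) : ℝ := f t - runningMin f a t

lemma drawdown_add_drawup (a t : α) :
    drawdown f a t + drawup f a t = runningMax f a t - runningMin f a t := by
  unfold drawdown drawup
  ring

variable {f}

lemma le_runningMax (hf : BddAbove (f '' Icc a t)) (hu : u ∈ Icc a t) :
    f u ≤ runningMax f a t :=
  le_csSup hf (mem_image_of_mem f hu)

lemma runningMin_le (hf : BddBelow (f '' Icc a t)) (hu : u ∈ Icc a t) :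
    runningMin f a t ≤ f u :=
  csInf_le hf (mem_image_of_mem f hu)

lemma runningMax_mono (hf : BddAbove (f '' Icc a t)) (hs : s ∈ Icc a t) :
    runningMax f a s ≤ runningMax f a t :=
  csSup_le_csSup hf ((nonempty_Icc.2 hs.1).image f) (image_mono (Icc_subset_Icc_right hs.2))

lemma runningMin_anti (hf : BddBelow (f '' Icc a t)) (hs : s ∈ Icc a t) :
    runningMin f a t ≤ runningMin f a s :=
  csInf_le_csInf hf ((nonempty_Icc.2 hs.1).image f) (image_mono (Icc_subset_Icc_right hs.2))

lemma drawdown_le (hf : IsBounded (f '' Icc a t)) (hs : s ∈ Icc a t) :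
    drawdown f a s ≤ runningMax f a t - runningMin f a t := by
  have hmax := runningMax_mono hf.bddAbove hs
  have hmin := runningMin_le hf.bddBelow hs
  unfold drawdown
  linarith

lemma drawup_le (hf : IsBounded (f '' Icc a t)) (hs : s ∈ Icc a t) :
    drawup f a s ≤ runningMax f a t - runningMin f a t := by
  have hmax := le_runningMax hf.bddAbove hs
  have hmin := runningMin_anti hf.bddBelow hs
  unfold drawup
  linarith

lemma sub_le_max_sSup_drawdown_sSup_drawup (hf : IsBounded (f '' Icc a t))
    (hu : u ∈ Icc a t) (hs : s ∈ Icc a t) :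
    f u - f s ≤ max (sSup (drawdown f a '' Icc a t)) (sSup (drawup f a '' Icc a t)) := by
  have hbdd {g : α → ℝ} (hg : ∀ s ∈ Icc a t, g s ≤ runningMax f a t - runningMin f a t) :
      BddAbove (g '' Icc a t) :=
    ⟨_, forall_mem_image.2 hg⟩
  rcases le_total u s with hus | hsu
  · have hsub : Icc a s ⊆ Icc a t := Icc_subset_Icc_right hs.2
    calc f u - f s ≤ drawdown f a s :=
          sub_le_sub_right (le_runningMax (hf.subset (image_mono hsub)).bddAbove ⟨hu.1, hus⟩) _
      _ ≤ sSup (drawdown f a '' Icc a t) :=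
          le_csSup (hbdd fun _ => drawdown_le hf) (mem_image_of_mem _ hs)
      _ ≤ _ := le_max_left _ _
  · have hsub : Icc a u ⊆ Icc a t := Icc_subset_Icc_right hu.2
    calc f u - f s ≤ drawup f a u :=
          sub_le_sub_left (runningMin_le (hf.subset (image_mono hsub)).bddBelow ⟨hs.1, hsu⟩) _
      _ ≤ sSup (drawup f a '' Icc a t) :=
          le_csSup (hbdd fun _ => drawup_le hf) (mem_image_of_mem _ hu)
      _ ≤ _ := le_max_right _ _

theorem runningMax_sub_runningMin_eq_max (hf : IsBounded (f '' Icc a t)) (hat : a ≤ t) :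
    runningMax f a t - runningMin f a t =
      max (sSup (drawdown f a '' Icc a t)) (sSup (drawup f a '' Icc a t)) := by
  have hne : (Icc a t).Nonempty := nonempty_Icc.2 hat
  refine le_antisymm ?_ (max_le ?_ ?_)
  · exact csSup_sub_csInf_le (hne.image f) (hne.image f) <| forall_mem_image.2 fun u hu =>
      forall_mem_image.2 fun s hs => sub_le_max_sSup_drawdown_sSup_drawup hf hu hs
  · exact csSup_le (hne.image _) (forall_mem_image.2 fun _ => drawdown_le hf)
  · exact csSup_le (hne.image _) (forall_mem_image.2 fun _ => drawup_le hf)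

end Drawdown

theorem stmt7_general (T : ℝ) (f : ℝ → ℝ)
    (hbdd : ∃ C : ℝ, ∀ s ∈ Set.Icc (0:ℝ) T, |f s| ≤ C)
    (M m Y Yh : ℝ → ℝ)
    (hM : ∀ t, M t = sSup (f '' Set.Icc (0:ℝ) t))
    (hm : ∀ t, m t = sInf (f '' Set.Icc (0:ℝ) t))
    (hY : ∀ t, Y t = M t - f t)
    (hYh : ∀ t, Yh t = f t - m t)
    (t : ℝ) (ht : t ∈ Set.Icc (0:ℝ) T) :
    Y t + Yh t = M t - m t ∧
    M t - m t = max (sSup (Y '' Set.Icc (0:ℝ) t)) (sSup (Yh '' Set.Icc (0:ℝ) t)) := by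
  obtain rfl : M = runningMax f 0 := funext hM
  obtain rfl : m = runningMin f 0 := funext hm
  obtain rfl : Y = drawdown f 0 := funext hY
  obtain rfl : Yh = drawup f 0 := funext hYh
  obtain ⟨C, hC⟩ := hbdd
  have hf : IsBounded (f '' Icc 0 T) :=
    isBounded_iff_forall_norm_le.2 ⟨C, forall_mem_image.2 hC⟩
  exact ⟨drawdown_add_drawup f 0 t, runningMax_sub_runningMin_eq_max
    (hf.subset (image_mono (Icc_subset_Icc_right ht.2))) ht.1⟩

theorem stmt7 (T : ℝ) (hT : 0 ≤ T) (f : ℝ → ℝ)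
    (hbdd : ∃ C : ℝ, ∀ s ∈ Set.Icc (0:ℝ) T, |f s| ≤ C)
    (M m Y Yh : ℝ → ℝ)
    (hM : ∀ t, M t = sSup (f '' Set.Icc (0:ℝ) t))
    (hm : ∀ t, m t = sInf (f '' Set.Icc (0:ℝ) t))
    (hY : ∀ t, Y t = M t - f t)
    (hYh : ∀ t, Yh t = f t - m t)
    (t : ℝ) (ht : t ∈ Set.Icc (0:ℝ) T) :
    Y t + Yh t = M t - m t ∧
    M t - m t = max (sSup (Y '' Set.Icc (0:ℝ) t)) (sSup (Yh '' Set.Icc (0:ℝ) t)) :=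
  stmt7_general T f hbdd M m Y Yh hM hm hY hYh t ht
end

section
/- Let W : [0,∞) → [0,∞) be continuous, nondecreasing, with ∫₀^∞ e^{−θx} W(x) dx = 1/ψ(θ) for all θ > θ₀, where ψ(θ) > 0 for θ > θ₀. For q ≥ 0 define W^{(q)}(x) = Σ_{k=0}^∞ q^k W^{⋆(k+1)}(x), where W^{⋆k} denotes the k-fold convolution of W with itself. Then for all θ > θ₀ with ψ(θ) > q, the series converges and ∫₀^∞ e^{−θx} W^{(q)}(x) dx = 1/(ψ(θ) − q). -/
open MeasureTheory Real

open scoped Convolution in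
private lemma stmt13_aux_cont (W : ℝ → ℝ) (hWc : Continuous W) (conv : ℕ → ℝ → ℝ)
    (hconv0 : conv 0 = W)
    (hconvS : ∀ (k : ℕ) (x : ℝ), conv (k + 1) x = ∫ y in (0:ℝ)..x, conv k (x - y) * W y) :
    ∀ k, Continuous (conv k) := by
  intro k
  induction k with
  | zero => rwa [hconv0]
  | succ k ih =>
    have h : conv (k+1) = fun x => ∫ y in (0:ℝ)..x, conv k (x - y) * W y :=
      funext (hconvS k)
    rw [h]
    apply intervalIntegral.continuous_parametric_intervalIntegral_of_continuous
      (f := fun x y => conv k (x - y) * W y)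
    · exact ((ih.comp (continuous_fst.sub continuous_snd)).mul (hWc.comp continuous_snd))
    · exact continuous_id

private lemma stmt13_aux_bound (W : ℝ → ℝ) (hWc : Continuous W) (hWm : MonotoneOn W (Set.Ici 0))
    (hWnn : ∀ x : ℝ, 0 ≤ x → 0 ≤ W x) (conv : ℕ → ℝ → ℝ)
    (hconv0 : conv 0 = W)
    (hconvS : ∀ (k : ℕ) (x : ℝ), conv (k + 1) x = ∫ y in (0:ℝ)..x, conv k (x - y) * W y)
    (hc : ∀ k, Continuous (conv k)) :
    ∀ k, ∀ x : ℝ, 0 ≤ x →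
      0 ≤ conv k x ∧ conv k x ≤ W x ^ (k+1) * x ^ k / (Nat.factorial k) := by
  intro k
  induction k with
  | zero =>
    intro x hx
    refine ⟨hconv0 ▸ hWnn x hx, ?_⟩
    simp [hconv0]
  | succ k ih =>
    intro x hx
    constructor
    · rw [hconvS]
      apply intervalIntegral.integral_nonneg hx
      intro y hy
      exact mul_nonneg ((ih (x - y) (by linarith [hy.1, hy.2])).1) (hWnn y hy.1)
    · rw [hconvS]
      have key : ∀ y ∈ Set.Icc (0:ℝ) x,
          conv k (x - y) * W y ≤ (W x ^ (k+2) / (Nat.factorial k)) * (x - y) ^ k := by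
        intro y hy
        have h1 : (0:ℝ) ≤ x - y := by linarith [hy.2]
        have h2 : x - y ≤ x := by linarith [hy.1]
        have hWle : W (x - y) ≤ W x := hWm h1 hx h2
        have hWyle : W y ≤ W x := hWm hy.1 hx hy.2
        have hb := (ih (x - y) h1).2
        have hWnn1 : 0 ≤ W (x - y) := hWnn _ h1
        have hWnn2 : 0 ≤ W y := hWnn _ hy.1
        have hWnnx : 0 ≤ W x := hWnn _ hx
        calc conv k (x - y) * W y
            ≤ (W (x - y) ^ (k+1) * (x - y) ^ k / (Nat.factorial k)) * W x := by
              apply mul_le_mul hb hWyle hWnn2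
              positivity
          _ ≤ (W x ^ (k+1) * (x - y) ^ k / (Nat.factorial k)) * W x := by
              gcongr
          _ = (W x ^ (k+2) / (Nat.factorial k)) * (x - y) ^ k := by ring
      have hint1 : IntervalIntegrable (fun y => conv k (x - y) * W y) volume 0 x := by
        apply Continuous.intervalIntegrable
        exact ((hc k).comp (continuous_const.sub continuous_id)).mul hWc
      have hint2 : IntervalIntegrable
          (fun y => (W x ^ (k+2) / (Nat.factorial k)) * (x - y) ^ k) volume 0 x := by
        apply Continuous.intervalIntegrable
        exact continuous_const.mul (((continuous_const.sub continuous_id).pow k))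
      have hmono := intervalIntegral.integral_mono_on hx hint1 hint2 key
      have hval : (∫ y in (0:ℝ)..x, (W x ^ (k+2) / (Nat.factorial k)) * (x - y) ^ k)
          = W x ^ (k+2) * x ^ (k+1) / (Nat.factorial (k+1)) := by
        rw [intervalIntegral.integral_const_mul]
        have : (∫ y in (0:ℝ)..x, (x - y) ^ k) = ∫ y in (x - x)..(x - 0), y ^ k :=
          intervalIntegral.integral_comp_sub_left (fun z => z ^ k) x
        rw [this]
        simp only [sub_self, sub_zero, integral_pow]
        rw [Nat.factorial_succ]
        have hk0 : (Nat.factorial k : ℝ) ≠ 0 := Nat.cast_ne_zero.2 k.factorial_ne_zero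
        have hk1 : ((k:ℝ) + 1) ≠ 0 := by positivity
        push_cast
        rw [div_mul_div_comm, mul_comm ((Nat.factorial k : ℝ)) ((k:ℝ)+1)]
        norm_num
      calc (∫ y in (0:ℝ)..x, conv k (x - y) * W y)
          ≤ _ := hmono
        _ = W x ^ (k+2) * x ^ (k+1) / (Nat.factorial (k+1)) := hval
        _ = W x ^ (k+1+1) * x ^ (k+1) / (Nat.factorial (k+1)) := by norm_num

open scoped Convolution in
private lemma stmt13_aux_LT (W : ℝ → ℝ)
    (conv : ℕ → ℝ → ℝ) (hconv0 : conv 0 = W)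
    (hconvS : ∀ (k : ℕ) (x : ℝ), conv (k + 1) x = ∫ y in (0:ℝ)..x, conv k (x - y) * W y)
    (θ : ℝ)
    (hWint : IntegrableOn (fun x => Real.exp (-θ*x) * W x) (Set.Ioi 0) volume) :
    ∀ k, IntegrableOn (fun x => Real.exp (-θ*x) * conv k x) (Set.Ioi 0) volume ∧
      ∫ x in Set.Ioi (0:ℝ), Real.exp (-θ*x) * conv k x
        = (∫ x in Set.Ioi (0:ℝ), Real.exp (-θ*x) * W x) ^ (k+1) := by
  let G : ℝ → ℝ := Set.indicator (Set.Ici 0) (fun y => Real.exp (-θ*y) * W y)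
  let F : ℕ → ℝ → ℝ :=
    fun k => Set.indicator (Set.Ici 0) (fun x => Real.exp (-θ*x) * conv k x)
  have hGint : Integrable G volume := by
    rw [show G = Set.indicator (Set.Ici 0) (fun y => Real.exp (-θ*y) * W y) from rfl,
      integrable_indicator_iff measurableSet_Ici]
    exact (integrableOn_Ici_iff_integrableOn_Ioi).2 hWint
  have hF0 : F 0 = G := by
    show Set.indicator _ _ = Set.indicator _ _
    rw [hconv0]
  have hFS : ∀ k, F (k+1) = F k ⋆[ContinuousLinearMap.mul ℝ ℝ, volume] G := by
    intro k
    funext x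
    by_cases hx : (0:ℝ) ≤ x
    · rw [MeasureTheory.convolution_def]
      simp only [ContinuousLinearMap.mul_apply']
      have hvanish : ∀ t, t ∉ Set.Icc 0 x → F k t * G (x - t) = 0 := by
        intro t ht
        simp only [Set.mem_Icc, not_and_or, not_le] at ht
        rcases ht with ht | ht
        · have : F k t = 0 := Set.indicator_of_notMem (by simpa using ht) _
          rw [this, zero_mul]
        · have : G (x - t) = 0 := Set.indicator_of_notMem (by simp; linarith) _
          rw [this, mul_zero]
      rw [← setIntegral_eq_integral_of_forall_compl_eq_zero hvanish,
        integral_Icc_eq_integral_Ioc, ← intervalIntegral.integral_of_le hx]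
      have hcongr : ∀ t ∈ Set.uIcc (0:ℝ) x,
          F k t * G (x - t) = Real.exp (-θ*x) * (conv k t * W (x - t)) := by
        intro t ht
        rw [Set.uIcc_of_le hx] at ht
        have h1 : F k t = Real.exp (-θ*t) * conv k t :=
          Set.indicator_of_mem (by exact ht.1) _
        have h2 : G (x - t) = Real.exp (-θ*(x-t)) * W (x - t) :=
          Set.indicator_of_mem (by simp; linarith [ht.2]) _
        rw [h1, h2, show -θ*x = -θ*t + -θ*(x-t) by ring, Real.exp_add]
        ring
      rw [intervalIntegral.integral_congr hcongr, intervalIntegral.integral_const_mul]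
      have hsym : (∫ t in (0:ℝ)..x, conv k t * W (x - t))
          = ∫ y in (0:ℝ)..x, conv k (x - y) * W y := by
        have h := intervalIntegral.integral_comp_sub_left
          (a := (0:ℝ)) (b := x) (fun y => conv k (x - y) * W y) x
        simp only [sub_sub_cancel, sub_self, sub_zero] at h
        exact h
      rw [hsym, ← hconvS]
      show (Set.Ici 0).indicator (fun x => Real.exp (-θ*x) * conv (k+1) x) x
        = Real.exp (-θ*x) * conv (k+1) x
      exact Set.indicator_of_mem (show x ∈ Set.Ici 0 from hx) _
    · rw [MeasureTheory.convolution_def]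
      have hzero : (fun t => (ContinuousLinearMap.mul ℝ ℝ) (F k t) (G (x - t)))
          = fun _ => (0:ℝ) := by
        funext t
        simp only [ContinuousLinearMap.mul_apply']
        by_cases ht : (0:ℝ) ≤ t
        · have : G (x - t) = 0 := Set.indicator_of_notMem (by simp; linarith) _
          rw [this, mul_zero]
        · have : F k t = 0 := Set.indicator_of_notMem (by simpa using ht) _
          rw [this, zero_mul]
      rw [hzero, integral_zero]
      exact Set.indicator_of_notMem (by simpa using hx) _
  have hFint : ∀ k, Integrable (F k) volume := by
    intro k
    induction k with
    | zero => rwa [hF0]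
    | succ k ih => rw [hFS k]; exact ih.integrable_convolution _ hGint
  have hGval : ∫ x, G x = ∫ x in Set.Ioi (0:ℝ), Real.exp (-θ*x) * W x := by
    rw [show G = Set.indicator (Set.Ici 0) (fun y => Real.exp (-θ*y) * W y) from rfl,
      integral_indicator measurableSet_Ici, integral_Ici_eq_integral_Ioi]
  have hFval : ∀ k, ∫ x, F k x = (∫ x in Set.Ioi (0:ℝ), Real.exp (-θ*x) * W x) ^ (k+1) := by
    intro k
    induction k with
    | zero => rw [hF0, hGval, pow_one]
    | succ k ih =>
      rw [hFS k, integral_convolution _ (hFint k) hGint, ih]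
      simp only [ContinuousLinearMap.mul_apply']
      rw [hGval]
      ring
  intro k
  have heq : Set.EqOn (F k) (fun x => Real.exp (-θ*x) * conv k x) (Set.Ioi 0) := by
    intro x hx
    exact Set.indicator_of_mem (le_of_lt hx) _
  constructor
  · exact (IntegrableOn.congr_fun ((hFint k).integrableOn) heq measurableSet_Ioi)
  · rw [← setIntegral_congr_fun measurableSet_Ioi heq, ← integral_Ici_eq_integral_Ioi,
      setIntegral_eq_integral_of_forall_compl_eq_zero
        (fun x hx => Set.indicator_of_notMem hx _), hFval k]

theorem stmt13 (W : ℝ → ℝ) (ψ : ℝ → ℝ) (θ₀ : ℝ)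
    (hWc : Continuous W) (hWm : MonotoneOn W (Set.Ici 0)) (hWnn : ∀ x : ℝ, 0 ≤ x → 0 ≤ W x)
    (hψpos : ∀ θ : ℝ, θ > θ₀ → 0 < ψ θ)
    (hLT : ∀ θ : ℝ, θ > θ₀ → ∫ x in Set.Ioi (0:ℝ), Real.exp (-θ * x) * W x = 1 / ψ θ)
    (conv : ℕ → ℝ → ℝ)
    (hconv0 : conv 0 = W)
    (hconvS : ∀ (k : ℕ) (x : ℝ), conv (k + 1) x = ∫ y in (0:ℝ)..x, conv k (x - y) * W y)
    (q : ℝ) (hq : 0 ≤ q) (θ : ℝ) (hθ : θ > θ₀) (hψq : ψ θ > q) :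
    (∀ x : ℝ, 0 ≤ x → Summable (fun k : ℕ => q ^ k * conv k x)) ∧
    ∫ x in Set.Ioi (0:ℝ), Real.exp (-θ * x) * (∑' k : ℕ, q ^ k * conv k x)
      = 1 / (ψ θ - q) := by
  have hc := stmt13_aux_cont W hWc conv hconv0 hconvS
  have hbd := stmt13_aux_bound W hWc hWm hWnn conv hconv0 hconvS hc
  have hψ : (0:ℝ) < ψ θ := hψpos θ hθ
  have hWint : IntegrableOn (fun x => Real.exp (-θ*x) * W x) (Set.Ioi 0) volume := by
    by_contra h
    have h2 := hLT θ hθ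
    rw [integral_undef h] at h2
    have h3 : (0:ℝ) < 1 / ψ θ := by positivity
    linarith
  have hLTk := stmt13_aux_LT W conv hconv0 hconvS θ hWint
  have hval : ∀ k : ℕ, ∫ x in Set.Ioi (0:ℝ), Real.exp (-θ*x) * conv k x
      = (1 / ψ θ) ^ (k+1) := by
    intro k
    rw [(hLTk k).2, hLT θ hθ]
  have hsum : ∀ x : ℝ, 0 ≤ x → Summable (fun k : ℕ => q ^ k * conv k x) := by
    intro x hx
    apply Summable.of_nonneg_of_le
      (fun k => mul_nonneg (pow_nonneg hq k) (hbd k x hx).1)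
      (fun k => ?_)
      ((Real.summable_pow_div_factorial (q * W x * x)).mul_left (W x))
    calc q ^ k * conv k x
        ≤ q ^ k * (W x ^ (k+1) * x ^ k / (Nat.factorial k)) :=
          mul_le_mul_of_nonneg_left (hbd k x hx).2 (pow_nonneg hq k)
      _ = W x * ((q * W x * x) ^ k / (Nat.factorial k)) := by
          rw [mul_pow, mul_pow, pow_succ]
          ring
  refine ⟨hsum, ?_⟩
  have hψne : ψ θ ≠ 0 := ne_of_gt hψ
  have hr0 : 0 ≤ q / ψ θ := div_nonneg hq hψ.le
  have hr1 : q / ψ θ < 1 := (div_lt_one hψ).2 hψq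
  set μ := volume.restrict (Set.Ioi (0:ℝ)) with hμ
  set f : ℕ → ℝ → ℝ := fun k x => Real.exp (-θ*x) * (q ^ k * conv k x) with hf
  have hfeq : ∀ k : ℕ, f k = fun x => q ^ k * (Real.exp (-θ*x) * conv k x) := by
    intro k
    funext x
    simp only [hf]
    ring
  have hfint : ∀ k, Integrable (f k) μ := by
    intro k
    rw [hfeq k]
    exact ((hLTk k).1.const_mul (q ^ k))
  have hfval : ∀ k : ℕ, ∫ x, f k x ∂μ = q ^ k * (1 / ψ θ) ^ (k+1) := by
    intro k
    simp only [hfeq k]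
    rw [integral_const_mul, hval k]
  have hfnn : ∀ k : ℕ, 0 ≤ᵐ[μ] f k := by
    intro k
    refine (ae_restrict_mem measurableSet_Ioi).mono (fun x hx => ?_)
    have hx0 : (0:ℝ) ≤ x := le_of_lt hx
    exact mul_nonneg (Real.exp_nonneg _) (mul_nonneg (pow_nonneg hq k) (hbd k x hx0).1)
  have hterm : ∀ k : ℕ, q ^ k * (1 / ψ θ) ^ (k+1) = (1 / ψ θ) * (q / ψ θ) ^ k := by
    intro k
    ring
  have htermsum : Summable (fun k : ℕ => q ^ k * (1 / ψ θ) ^ (k+1)) := by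
    simp only [hterm]
    exact (summable_geometric_of_lt_one hr0 hr1).mul_left _
  have htermnn : ∀ k : ℕ, 0 ≤ q ^ k * (1 / ψ θ) ^ (k+1) := by
    intro k
    positivity
  have hmeas : ∀ k : ℕ, AEStronglyMeasurable (f k) μ := by
    intro k
    exact (((Real.continuous_exp.comp (continuous_const.mul continuous_id)).mul
      (continuous_const.mul (hc k)))).aestronglyMeasurable
  have hnormval : ∀ k : ℕ, ∫⁻ x, ‖f k x‖₊ ∂μ = ENNReal.ofReal (q ^ k * (1 / ψ θ) ^ (k+1)) := by
    intro k
    have h1 : ∫⁻ x, ‖f k x‖₊ ∂μ = ∫⁻ x, ENNReal.ofReal (f k x) ∂μ := by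
      apply lintegral_congr_ae
      exact (hfnn k).mono (fun x hx => Real.enorm_eq_ofReal hx)
    rw [h1, ← ofReal_integral_eq_lintegral_ofReal (hfint k) (hfnn k), hfval k]
  have hnorm : (∑' k : ℕ, ∫⁻ x, ‖f k x‖₊ ∂μ) ≠ ⊤ := by
    simp only [hnormval]
    rw [← ENNReal.ofReal_tsum_of_nonneg htermnn htermsum]
    exact ENNReal.ofReal_ne_top
  have h1 : ∀ x : ℝ, Real.exp (-θ * x) * (∑' k : ℕ, q ^ k * conv k x)
      = ∑' k : ℕ, f k x := by
    intro x
    exact (tsum_mul_left).symm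
  have hstep : (∫ x in Set.Ioi (0:ℝ), Real.exp (-θ * x) * (∑' k : ℕ, q ^ k * conv k x))
      = ∫ x, (∑' k : ℕ, f k x) ∂μ :=
    integral_congr_ae (Filter.Eventually.of_forall (fun x => h1 x))
  rw [hstep, integral_tsum hmeas hnorm]
  calc (∑' k : ℕ, ∫ x, f k x ∂μ)
      = ∑' k : ℕ, (1 / ψ θ) * (q / ψ θ) ^ k := by simp only [hfval, hterm]
    _ = (1 / ψ θ) * (1 - q / ψ θ)⁻¹ := by
        rw [tsum_mul_left, tsum_geometric_of_lt_one hr0 hr1]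
    _ = 1 / (ψ θ - q) := by
        have h2 : ψ θ - q ≠ 0 := sub_ne_zero.2 (ne_of_gt hψq)
        have h3 : 1 - q / ψ θ ≠ 0 := by
          rw [sub_ne_zero]
          intro heq
          rw [eq_comm, div_eq_one_iff_eq hψne] at heq
          exact (ne_of_gt hψq) heq.symm
        field_simp
end

section
/- Let α ∈ (1,2], σ > 0, μ ≠ 0, and define W(x) = (1/μ)[1 − E_{α−1,1}(−(μ/σ^α) x^{α−1})], A = (μ/σ^α) a^{α−1} for a > 0. Then W is differentiable on (0,∞) with W′(x) = ((α−1)/σ^α) x^{α−2} E′_{α−1,1}(−(μ/σ^α) x^{α−1}), and consequently W′(a)/W(a)² · ∫₀^a W(z)dz = (α−1) A E′_{α−1,1}(−A) · (1 − E_{α−1,2}(−A)) / (1 − E_{α−1,1}(−A))². -/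
/-!
The coefficients `1 / Γ(nβ + γ)` of the Mittag-Leffler series have successive ratios tending to `0`
(log-convexity of `Γ` gives `Γ(x + β) ≥ (x + β - 1)^β Γ(x)` for `β < 1`), so `E_{β,γ}` is an entire
power series and the derivative formula for `W` is the chain rule. Integrating term by term,
`∫₀^a z^(nβ + γ - 1) = a^(nβ + γ) / (nβ + γ)` and `(nβ + γ) Γ(nβ + γ) = Γ(nβ + γ + 1)` give
`∫₀^a E_{β,γ}(c z^β) z^(γ-1) dz = a^γ E_{β,γ+1}(c a^β)`, and the ratio identity is algebra.
-/

open MeasureTheory Real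

/-- The two-parameter Mittag-Leffler function `E_{β,γ}(y) = ∑ yⁿ / Γ(nβ + γ)`. -/
noncomputable def mittagLeffler (β γ y : ℝ) : ℝ :=
  ∑' n : ℕ, y ^ n / Real.Gamma ((n : ℝ) * β + γ)

open Filter

namespace Real

lemma rpow_mul_Gamma_le_Gamma_add {x β : ℝ} (hβ0 : 0 < β) (hβ1 : β < 1) (hx : 1 < x + β) :
    (x + β - 1) ^ β * Gamma x ≤ Gamma (x + β) := by
  set y := x + β - 1
  have hy : 0 < y := by linarith
  have hΓy : 0 < Gamma y := Gamma_pos_of_pos hy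
  have hlogconv := Gamma_mul_add_mul_le_rpow_Gamma_mul_rpow_Gamma hy (by linarith : 0 < y + 1)
    hβ0 (sub_pos.2 hβ1) (add_sub_cancel β 1)
  rw [show β * y + (1 - β) * (y + 1) = x by ring, Gamma_add_one hy.ne',
    mul_rpow hy.le hΓy.le, mul_left_comm, ← rpow_add hΓy, add_sub_cancel, rpow_one] at hlogconv
  calc y ^ β * Gamma x ≤ y ^ β * (y ^ (1 - β) * Gamma y) := by gcongr
    _ = Gamma (x + β) := by
      rw [← mul_assoc, ← rpow_add hy, add_sub_cancel, rpow_one, ← Gamma_add_one hy.ne',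
        sub_add_cancel]

lemma tendsto_Gamma_add_div_Gamma_atTop {β : ℝ} (hβ : 0 < β) :
    Tendsto (fun x => Gamma (x + β) / Gamma x) atTop atTop := by
  set b := min β (1 / 2)
  have hb0 : 0 < b := lt_min hβ one_half_pos
  have hb1 : b < 1 := (min_le_right _ _).trans_lt (by norm_num)
  have hbβ : b ≤ β := min_le_left _ _
  refine tendsto_atTop_mono' atTop ?_ ((tendsto_rpow_atTop hb0).comp
    (tendsto_atTop_add_const_right atTop (b - 1) tendsto_id))
  filter_upwards [eventually_ge_atTop 2] with x hx
  have hΓx : 0 < Gamma x := Gamma_pos_of_pos (by linarith)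
  rw [Function.comp_apply, id, le_div_iff₀ hΓx, ← add_sub_assoc]
  calc (x + b - 1) ^ b * Gamma x ≤ Gamma (x + b) :=
        rpow_mul_Gamma_le_Gamma_add hb0 hb1 (by linarith)
    _ ≤ Gamma (x + β) := Gamma_strictMonoOn_Ici.monotoneOn (Set.mem_Ici.2 (by linarith))
        (Set.mem_Ici.2 (by linarith)) (by linarith)

end Real

open FormalMultilinearSeries

section MittagLeffler

variable {β γ : ℝ}

noncomputable def mittagLefflerSeries (β γ : ℝ) : FormalMultilinearSeries ℝ ℝ ℝ :=
  ofScalars ℝ fun n => (Gamma (n * β + γ))⁻¹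

lemma mittagLeffler_eq_sum : mittagLeffler β γ = (mittagLefflerSeries β γ).sum := by
  ext y
  simp only [mittagLefflerSeries, ← ofScalarsSum.eq_1, ofScalars_sum_eq, smul_eq_mul, mittagLeffler,
    div_eq_inv_mul]

lemma mittagLefflerSeries_radius (hβ : 0 < β) : (mittagLefflerSeries β γ).radius = ⊤ := by
  have hx : Tendsto (fun n : ℕ => (n : ℝ) * β + γ) atTop atTop :=
    tendsto_atTop_add_const_right _ γ (tendsto_natCast_atTop_atTop.atTop_mul_const hβ)
  have hpos : ∀ᶠ n : ℕ in atTop, 0 < Gamma (n * β + γ) :=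
    hx.eventually (eventually_gt_atTop 0) |>.mono fun n hn => Gamma_pos_of_pos hn
  refine ofScalars_radius_eq_top_of_tendsto ℝ _ (hpos.mono fun n hn => inv_ne_zero hn.ne') ?_
  refine ((tendsto_Gamma_add_div_Gamma_atTop hβ).comp hx).inv_tendsto_atTop.congr' ?_
  filter_upwards [hpos, hx.eventually (eventually_gt_atTop (-β))] with n hn hn'
  have : 0 < Gamma (n * β + β + γ) := Gamma_pos_of_pos (by linarith)
  simp only [Function.comp_apply, Pi.inv_apply, norm_inv, norm_eq_abs, abs_of_pos hn,
    abs_of_pos this, Nat.cast_succ, add_mul, one_mul, inv_div_inv, add_right_comm, inv_div]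

lemma analyticAt_mittagLeffler (hβ : 0 < β) (y : ℝ) : AnalyticAt ℝ (mittagLeffler β γ) y := by
  rw [mittagLeffler_eq_sum]
  exact (mittagLefflerSeries β γ).analyticOnNhd y (by simp [mittagLefflerSeries_radius hβ])

lemma hasDerivAt_mittagLeffler (hβ : 0 < β) (y : ℝ) :
    HasDerivAt (mittagLeffler β γ) (deriv (mittagLeffler β γ) y) y :=
  (analyticAt_mittagLeffler hβ y).differentiableAt.hasDerivAt

lemma continuous_mittagLeffler (hβ : 0 < β) : Continuous (mittagLeffler β γ) :=
  continuous_iff_continuousAt.2 fun y => (analyticAt_mittagLeffler hβ y).continuousAt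

lemma summable_norm_mittagLeffler (hβ : 0 < β) (y : ℝ) :
    Summable fun n : ℕ => ‖y ^ n / Gamma (n * β + γ)‖ := by
  have := (mittagLefflerSeries β γ).summable_norm_mul_pow (r := ‖y‖₊)
    (by simp [mittagLefflerSeries_radius hβ])
  simpa [mittagLefflerSeries, norm_div, div_eq_inv_mul] using this

lemma integral_rpow_sub_one {s : ℝ} (hs : 0 < s) (a : ℝ) :
    ∫ z in 0..a, z ^ (s - 1) = a ^ s / s := by
  rw [integral_rpow (Or.inl (by linarith)), sub_add_cancel, zero_rpow hs.ne', sub_zero]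

lemma mittagLeffler_term_mul_rpow {z : ℝ} (hz : 0 < z) (c : ℝ) (n : ℕ) :
    (c * z ^ β) ^ n / Gamma (n * β + γ) * z ^ (γ - 1)
      = c ^ n / Gamma (n * β + γ) * z ^ (n * β + γ - 1) := by
  rw [mul_pow, ← rpow_natCast (z ^ β), ← rpow_mul hz.le,
    show n * β + γ - 1 = β * n + (γ - 1) by ring, rpow_add hz]
  ring

lemma integral_mittagLeffler_term (hβ : 0 ≤ β) (hγ : 0 < γ) (c : ℝ) {a : ℝ} (ha : 0 < a)
    (n : ℕ) :
    ∫ z in 0..a, c ^ n / Gamma (n * β + γ) * z ^ (n * β + γ - 1)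
      = a ^ γ * ((c * a ^ β) ^ n / Gamma (n * β + (γ + 1))) := by
  have hs : 0 < n * β + γ := by positivity
  rw [intervalIntegral.integral_const_mul, integral_rpow_sub_one hs, ← add_assoc,
    Gamma_add_one hs.ne', rpow_add ha, mul_comm (n : ℝ), rpow_mul ha.le, rpow_natCast]
  field_simp
  ring

theorem integral_mittagLeffler_mul_rpow (hβ : 0 < β) (hγ : 0 < γ) (c : ℝ) {a : ℝ} (ha : 0 < a) :
    ∫ z in 0..a, mittagLeffler β γ (c * z ^ β) * z ^ (γ - 1)
      = a ^ γ * mittagLeffler β (γ + 1) (c * a ^ β) := by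
  set F : ℕ → ℝ → ℝ := fun n z => c ^ n / Gamma (n * β + γ) * z ^ (n * β + γ - 1)
  have hs (n : ℕ) : 0 < n * β + γ := by positivity
  have hF_int (n : ℕ) : IntegrableOn (F n) (Set.Ioc 0 a) := by
    refine (intervalIntegrable_iff_integrableOn_Ioc_of_le ha.le).1 ?_
    exact (intervalIntegral.intervalIntegrable_rpow' (by linarith [hs n])).const_mul _
  have hF_norm (n : ℕ) : ∫ z in Set.Ioc 0 a, ‖F n z‖
      = a ^ γ * ((|c| * a ^ β) ^ n / Gamma (n * β + (γ + 1))) := by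
    rw [← integral_mittagLeffler_term hβ.le hγ |c| ha, intervalIntegral.integral_of_le ha.le]
    refine setIntegral_congr_fun measurableSet_Ioc fun z hz => ?_
    simp only [F, norm_mul, norm_div, norm_pow, norm_eq_abs, abs_of_pos (Gamma_pos_of_pos (hs n)),
      abs_of_pos (rpow_pos_of_pos hz.1 _)]
  have hF_sum : Summable fun n => ∫ z in Set.Ioc 0 a, ‖F n z‖ := by
    simp only [hF_norm]
    exact (summable_norm_mittagLeffler hβ _).of_norm.mul_left _
  have hF_hasSum := hasSum_integral_of_summable_integral_norm hF_int hF_sum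
  have hF_tsum : ∀ z ∈ Set.Ioc 0 a, mittagLeffler β γ (c * z ^ β) * z ^ (γ - 1) = ∑' n, F n z :=
    fun z hz => by
      rw [mittagLeffler, ← tsum_mul_right]
      exact tsum_congr (mittagLeffler_term_mul_rpow hz.1 c)
  rw [intervalIntegral.integral_of_le ha.le, setIntegral_congr_fun measurableSet_Ioc hF_tsum]
  refine hF_hasSum.unique ?_
  simp only [F, ← intervalIntegral.integral_of_le ha.le, integral_mittagLeffler_term hβ.le hγ c ha]
  exact (summable_norm_mittagLeffler hβ (c * a ^ β)).of_norm.hasSum.mul_left (a ^ γ)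

lemma hasDerivAt_mittagLeffler_mul_rpow (hβ : 0 < β) (c : ℝ) {x : ℝ} (hx : 0 < x) :
    HasDerivAt (fun x => mittagLeffler β γ (c * x ^ β))
      (deriv (mittagLeffler β γ) (c * x ^ β) * (c * (β * x ^ (β - 1)))) x :=
  (hasDerivAt_mittagLeffler hβ _).comp x ((hasDerivAt_rpow_const (Or.inl hx.ne')).const_mul c)

lemma integral_one_sub_mittagLeffler_mul_rpow (hβ : 0 < β) (c : ℝ) {a : ℝ} (ha : 0 < a) :
    ∫ z in 0..a, (1 - mittagLeffler β 1 (c * z ^ β)) = a * (1 - mittagLeffler β 2 (c * a ^ β)) := by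
  have hE := integral_mittagLeffler_mul_rpow hβ one_pos c ha
  simp only [sub_self, rpow_zero, mul_one, rpow_one, one_add_one_eq_two] at hE
  have hcont : Continuous fun z => mittagLeffler β 1 (c * z ^ β) :=
    (continuous_mittagLeffler hβ).comp (continuous_const.mul (continuous_rpow_const hβ.le))
  rw [intervalIntegral.integral_sub intervalIntegrable_const (hcont.intervalIntegrable 0 a), hE,
    intervalIntegral.integral_const, sub_zero, smul_eq_mul, mul_one, mul_one_sub]

end MittagLeffler

theorem stmt19_general (α σ μ : ℝ) (hα1 : 1 < α) (hμ : μ ≠ 0)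
    (W : ℝ → ℝ)
    (hW : ∀ x : ℝ, W x = (1 / μ) * (1 - mittagLeffler (α - 1) 1 (-(μ / σ ^ α) * x ^ (α - 1))))
    (a : ℝ) (ha : 0 < a) (A : ℝ) (hA : A = (μ / σ ^ α) * a ^ (α - 1)) :
    (∀ x : ℝ, 0 < x → HasDerivAt W
      (((α - 1) / σ ^ α) * x ^ (α - 2) *
        deriv (mittagLeffler (α - 1) 1) (-(μ / σ ^ α) * x ^ (α - 1))) x) ∧
    deriv W a / (W a) ^ 2 * ∫ z in (0:ℝ)..a, W z
      = (α - 1) * A * deriv (mittagLeffler (α - 1) 1) (-A) *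
        (1 - mittagLeffler (α - 1) 2 (-A)) / (1 - mittagLeffler (α - 1) 1 (-A)) ^ 2 := by
  have hβ : 0 < α - 1 := sub_pos.2 hα1
  have hW' : W = fun x => (1 / μ) * (1 - mittagLeffler (α - 1) 1 (-(μ / σ ^ α) * x ^ (α - 1))) :=
    funext hW
  have hderiv (x : ℝ) (hx : 0 < x) : HasDerivAt W (((α - 1) / σ ^ α) * x ^ (α - 2) *
      deriv (mittagLeffler (α - 1) 1) (-(μ / σ ^ α) * x ^ (α - 1))) x := by
    rw [hW']
    refine ((hasDerivAt_mittagLeffler_mul_rpow hβ _ hx).const_sub 1).const_mul (1 / μ)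
      |>.congr_deriv ?_
    rw [show α - 1 - 1 = α - 2 by ring]
    field_simp
  refine ⟨hderiv, ?_⟩
  have hA' : -(μ / σ ^ α) * a ^ (α - 1) = -A := by rw [hA]; ring
  rw [(hderiv a ha).deriv, hW a, hW', intervalIntegral.integral_const_mul,
    integral_one_sub_mittagLeffler_mul_rpow hβ _ ha, hA', show α - 2 = α - 1 - 1 by ring,
    rpow_sub_one ha.ne']
  generalize deriv (mittagLeffler (α - 1) 1) (-A) = D
  generalize mittagLeffler (α - 1) 2 (-A) = e₂
  generalize mittagLeffler (α - 1) 1 (-A) = e₁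
  subst hA
  rcases eq_or_ne (1 - e₁) 0 with h | h
  · simp [h] -- both sides are junk `_ / 0 = 0`
  · field_simp

theorem stmt19 (α σ μ : ℝ) (hα1 : 1 < α) (hα2 : α ≤ 2) (hσ : 0 < σ) (hμ : μ ≠ 0)
    (W : ℝ → ℝ)
    (hW : ∀ x : ℝ, W x = (1 / μ) * (1 - mittagLeffler (α - 1) 1 (-(μ / σ ^ α) * x ^ (α - 1))))
    (a : ℝ) (ha : 0 < a) (A : ℝ) (hA : A = (μ / σ ^ α) * a ^ (α - 1)) :
    (∀ x : ℝ, 0 < x → HasDerivAt W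
      (((α - 1) / σ ^ α) * x ^ (α - 2) *
        deriv (mittagLeffler (α - 1) 1) (-(μ / σ ^ α) * x ^ (α - 1))) x) ∧
    deriv W a / (W a) ^ 2 * ∫ z in (0:ℝ)..a, W z
      = (α - 1) * A * deriv (mittagLeffler (α - 1) 1) (-A) *
        (1 - mittagLeffler (α - 1) 2 (-A)) / (1 - mittagLeffler (α - 1) 1 (-A)) ^ 2 :=
  stmt19_general α σ μ hα1 hμ W hW a ha A hA
end
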